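/- Let (P,τ) be a nonempty perfect completely metrizable space. For every countable ordinal α, every point z ∈ P, and every r > 0, there exists a compact countable subset K of P with K ⊆ B(z,r) and K^(α) = {z}. -/

import Mathlib

/-!
Induction on `α`. For `α > 0`, the perfectness of `P` gives points `c n → z`, `c n ≠ z`, with
pairwise disjoint balls `B(c n, ρ n) ⊆ B(z, r)` avoiding `z` and shrinking to `z`; the countability
of `α` gives `β n < α` cofinal in `α`; induction gives compact countable `K n ⊆ B(c n, ρ n)` with
`K n ^ (β n) = {c n}`. The set `K = {z} ∪ ⋃ n, K n` is compact and countable. Derivatives commute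
with restriction to open sets, so `K ^ (γ) ∩ B(c n, ρ n) = K n ^ (γ) ∩ B(c n, ρ n)`: hence
`K ^ (α)` meets no `K n`, since `K n ^ (β n + 1) = ∅`, while for every `γ < α` the point `z` is
a limit of points `c n ∈ K ^ (γ)`, so `z ∈ K ^ (α)`.
-/

/-- The Cantor-Bendixson derivative of a set, by transfinite recursion. -/
noncomputable def cbDeriv {X : Type*} [TopologicalSpace X] (A : Set X) (o : Ordinal) : Set X :=
  Ordinal.limitRecOn o A (fun _ ih => derivedSet ih)
    (fun o _ ih => ⋂ (b : Set.Iio o), ih b.1 b.2)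

/-- `IsCB A α p` : the Cantor-Bendixson characteristic of `A` is `(α, p)`,
i.e. `α` is the least ordinal with `A^(α)` finite, and `p = |A^(α)|`. -/
def IsCB {X : Type*} [TopologicalSpace X] (A : Set X) (α : Ordinal) (p : ℕ) : Prop :=
  (cbDeriv A α).Finite ∧ (∀ β < α, ¬ (cbDeriv A β).Finite) ∧ (cbDeriv A α).ncard = p

open Filter Topology Metric Set Function

section CantorBendixson

variable {X : Type*} [TopologicalSpace X]

@[simp] lemma cbDeriv_zero (A : Set X) : cbDeriv A 0 = A :=
  Ordinal.limitRecOn_zero ..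

@[simp] lemma cbDeriv_succ (A : Set X) (o : Ordinal) :
    cbDeriv A (Order.succ o) = derivedSet (cbDeriv A o) :=
  Ordinal.limitRecOn_add_one ..

lemma cbDeriv_limit (A : Set X) {o : Ordinal} (ho : Order.IsSuccLimit o) :
    cbDeriv A o = ⋂ b : Iio o, cbDeriv A b :=
  Ordinal.limitRecOn_limit _ _ _ _ ho

lemma isClosed_cbDeriv [T1Space X] {A : Set X} (hA : IsClosed A) (o : Ordinal) :
    IsClosed (cbDeriv A o) := by
  induction o using Ordinal.limitRecOn with
  | zero => simpa
  | add_one o ih =>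
    rw [← Order.succ_eq_add_one, cbDeriv_succ]
    exact isClosed_derivedSet _
  | limit o ho ih => simpa [cbDeriv_limit _ ho] using isClosed_iInter fun b : Iio o => ih b b.2

lemma cbDeriv_succ_subset [T1Space X] {A : Set X} (hA : IsClosed A) (o : Ordinal) :
    cbDeriv A (Order.succ o) ⊆ cbDeriv A o := by
  rw [cbDeriv_succ]
  exact (isClosed_iff_derivedSet_subset _).1 (isClosed_cbDeriv hA o)

lemma cbDeriv_antitone [T1Space X] {A : Set X} (hA : IsClosed A) : Antitone (cbDeriv A) := by
  intro b o hbo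
  induction o using Ordinal.limitRecOn with
  | zero => rw [nonpos_iff_eq_zero.1 hbo]
  | add_one o ih =>
    rw [← Order.succ_eq_add_one] at hbo ⊢
    rcases Order.le_succ_iff_eq_or_le.1 hbo with rfl | h
    · rfl
    · exact (cbDeriv_succ_subset hA o).trans (ih h)
  | limit o ho ih =>
    rcases hbo.eq_or_lt with rfl | h
    · rfl
    · rw [cbDeriv_limit _ ho]
      exact iInter_subset (fun c : Iio o => cbDeriv A c) ⟨b, h⟩

lemma cbDeriv_subset [T1Space X] {A : Set X} (hA : IsClosed A) (o : Ordinal) :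
    cbDeriv A o ⊆ A := by
  simpa using cbDeriv_antitone hA (zero_le : 0 ≤ o)

lemma mem_cbDeriv_of_forall_lt [T1Space X] {A : Set X} (hA : IsClosed A) {x : X} {α : Ordinal}
    (hα : α ≠ 0) (h : ∀ γ < α, x ∈ cbDeriv A (Order.succ γ)) : x ∈ cbDeriv A α := by
  rcases Ordinal.zero_or_succ_or_isSuccLimit α with rfl | ⟨γ, rfl⟩ | hlim
  · exact absurd rfl hα
  · exact h γ (Order.lt_succ γ)
  · rw [cbDeriv_limit _ hlim]
    exact mem_iInter.2 fun γ => cbDeriv_succ_subset hA γ (h γ γ.2)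

lemma derivedSet_inter_open {A U : Set X} (hU : IsOpen U) :
    derivedSet A ∩ U = derivedSet (A ∩ U) ∩ U := by
  ext x
  simp only [mem_inter_iff, mem_derivedSet, and_congr_left_iff, AccPt]
  intro hx
  have hle : 𝓝[≠] x ≤ 𝓟 U := le_principal_iff.2 (nhdsWithin_le_nhds (hU.mem_nhds hx))
  rw [← inf_principal, inf_comm (𝓟 A), ← inf_assoc, inf_of_le_left hle]

lemma cbDeriv_inter_open {U : Set X} (hU : IsOpen U) (A : Set X) (o : Ordinal) :
    cbDeriv A o ∩ U = cbDeriv (A ∩ U) o ∩ U := by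
  induction o using Ordinal.limitRecOn with
  | zero => simp
  | add_one o ih =>
    rw [← Order.succ_eq_add_one, cbDeriv_succ, cbDeriv_succ, derivedSet_inter_open hU, ih,
      ← derivedSet_inter_open hU]
  | limit o ho ih =>
    have : Nonempty (Iio o) := ⟨⟨0, ho.bot_lt⟩⟩
    simp only [cbDeriv_limit _ ho, iInter_inter]
    exact iInter_congr fun b => ih b b.2

lemma derivedSet_singleton [T1Space X] (a : X) : derivedSet ({a} : Set X) = ∅ := by
  refine eq_empty_of_forall_notMem fun x hx => ?_
  obtain rfl : x = a := by simpa using derivedSet_subset_closure _ hx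
  obtain ⟨y, ⟨-, rfl⟩, hne⟩ := accPt_iff_nhds.1 hx univ univ_mem
  exact hne rfl

lemma mem_derivedSet_of_tendsto {S : Set X} {u : ℕ → X} {x : X} (hu : Tendsto u atTop (𝓝 x))
    (hne : ∀ n, u n ≠ x) (hS : ∃ᶠ n in atTop, u n ∈ S) : x ∈ derivedSet S := by
  rw [mem_derivedSet, accPt_iff_frequently]
  exact hu.frequently (hS.mono fun n hn => ⟨hne n, hn⟩)

end CantorBendixson

section Gluing

variable {X : Type*} {z : X} {K U : ℕ → Set X}

lemma insert_iUnion_inter_eq (hUd : Pairwise (Disjoint on U)) (hzU : ∀ n, z ∉ U n)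
    (hKU : ∀ n, K n ⊆ U n) (n : ℕ) : insert z (⋃ m, K m) ∩ U n = K n := by
  refine subset_antisymm ?_ fun x hx => ⟨mem_insert_of_mem z (mem_iUnion.2 ⟨n, hx⟩), hKU n hx⟩
  rintro x ⟨rfl | hx, hxU⟩
  · exact absurd hxU (hzU n)
  obtain ⟨m, hm⟩ := mem_iUnion.1 hx
  obtain rfl : m = n := by_contra fun hmn => (hUd hmn).notMem_of_mem_left (hKU m hm) hxU
  exact hm

variable [TopologicalSpace X]

lemma isCompact_insert_iUnion (hK : ∀ n, IsCompact (K n))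
    (hKz : Tendsto K atTop (𝓝 z).smallSets) : IsCompact (insert z (⋃ n, K n)) := by
  classical
  refine isCompact_of_finite_subcover fun V hVo hcover => ?_
  obtain ⟨i, hi⟩ := mem_iUnion.1 (hcover (mem_insert z _))
  obtain ⟨N, hN⟩ := eventually_atTop.1 (tendsto_smallSets_iff.1 hKz _ ((hVo i).mem_nhds hi))
  obtain ⟨t, ht⟩ := ((finite_lt_nat N).isCompact_biUnion fun n _ => hK n).elim_finite_subcover
    V hVo ((iUnion₂_subset_iUnion _ _).trans ((subset_insert _ _).trans hcover))
  refine ⟨insert i t, ?_⟩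
  rintro x (rfl | hx)
  · exact mem_biUnion (Finset.mem_insert_self i t) hi
  obtain ⟨n, hn⟩ := mem_iUnion.1 hx
  rcases lt_or_ge n N with h | h
  · exact biUnion_subset_biUnion_left (Finset.subset_insert i t) (ht (mem_biUnion h hn))
  · exact mem_biUnion (Finset.mem_insert_self i t) (hN n h hn)

variable [T2Space X]

lemma cbDeriv_insert_iUnion_eq_singleton (hU : ∀ n, IsOpen (U n))
    (hUd : Pairwise (Disjoint on U)) (hzU : ∀ n, z ∉ U n) (hUz : Tendsto U atTop (𝓝 z).smallSets)
    (hK : ∀ n, IsCompact (K n)) (hKU : ∀ n, K n ⊆ U n) {c : ℕ → X} {β : ℕ → Ordinal}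
    {α : Ordinal} (hcb : ∀ n, cbDeriv (K n) (β n) = {c n}) (hβα : ∀ n, β n < α)
    (hβ : ∀ γ < α, ∃ᶠ n in atTop, γ ≤ β n) :
    cbDeriv (insert z (⋃ n, K n)) α = {z} := by
  set L := insert z (⋃ n, K n)
  have hL : IsClosed L :=
    (isCompact_insert_iUnion hK (hUz.smallSets_mono (.of_forall hKU))).isClosed
  have hloc (n : ℕ) (γ : Ordinal) : cbDeriv L γ ∩ U n = cbDeriv (K n) γ ∩ U n := by
    rw [cbDeriv_inter_open (hU n), insert_iUnion_inter_eq hUd hzU hKU]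
  have hcK (n : ℕ) : c n ∈ cbDeriv (K n) (β n) := (hcb n).symm ▸ rfl
  have hcU (n : ℕ) : c n ∈ U n := hKU n (cbDeriv_subset (hK n).isClosed _ (hcK n))
  refine subset_antisymm (fun x hx => ?_) (singleton_subset_iff.2 ?_)
  · by_contra hxz
    obtain ⟨n, hxn⟩ := mem_iUnion.1 ((cbDeriv_subset hL α hx).resolve_left hxz)
    have : x ∈ cbDeriv L (Order.succ (β n)) ∩ U n :=
      ⟨cbDeriv_antitone hL (Order.succ_le_of_lt (hβα n)) hx, hKU n hxn⟩
    rw [hloc, cbDeriv_succ, hcb, derivedSet_singleton] at this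
    exact this.1
  · refine mem_cbDeriv_of_forall_lt hL (hβα 0).ne_bot fun γ hγ => ?_
    rw [cbDeriv_succ]
    refine mem_derivedSet_of_tendsto (hUz.of_smallSets (.of_forall hcU))
      (fun n h => hzU n (h ▸ hcU n)) ((hβ γ hγ).mono fun n hn => ?_)
    have : c n ∈ cbDeriv (K n) γ ∩ U n := ⟨cbDeriv_antitone (hK n).isClosed hn (hcK n), hcU n⟩
    exact (hloc n γ ▸ this).1

end Gluing

section Metric

variable {P : Type*} [MetricSpace P] {z : P} {r : ℝ}

lemma exists_seq_dist_lt_quarter (hz : (𝓝[≠] z).NeBot) (hr : 0 < r) :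
    ∃ c : ℕ → P, (∀ n, c n ≠ z) ∧ dist (c 0) z < r ∧
      ∀ n, dist (c (n + 1)) z < dist (c n) z / 4 := by
  have hpick (ε : ℝ) (hε : 0 < ε) : ∃ y, y ≠ z ∧ dist y z < ε := by
    obtain ⟨y, hyz, hy⟩ := hz.nonempty_of_mem (inter_mem_nhdsWithin _ (ball_mem_nhds z hε))
    exact ⟨y, hyz, hy⟩
  choose pick hpick_ne hpick_lt using hpick
  let s : ℕ → {y // y ≠ z} := fun n => Nat.rec (motive := fun _ => {y // y ≠ z})
    ⟨pick r hr, hpick_ne _ _⟩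
    (fun _ y => ⟨pick (dist y.1 z / 4) (by have := dist_pos.2 y.2; positivity), hpick_ne _ _⟩) n
  exact ⟨fun n => (s n).1, fun n => (s n).2, hpick_lt _ _,
    fun n => hpick_lt (dist (s n).1 z / 4) _⟩

lemma exists_pairwise_disjoint_balls_tendsto (hz : (𝓝[≠] z).NeBot) (hr : 0 < r) :
    ∃ (c : ℕ → P) (ρ : ℕ → ℝ), (∀ n, 0 < ρ n) ∧ (∀ n, ball (c n) (ρ n) ⊆ ball z r) ∧
      (∀ n, z ∉ ball (c n) (ρ n)) ∧ Pairwise (Disjoint on fun n => ball (c n) (ρ n)) ∧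
      Tendsto (fun n => ball (c n) (ρ n)) atTop (𝓝 z).smallSets := by
  obtain ⟨c, hcz, hc0, hc⟩ := exists_seq_dist_lt_quarter hz (half_pos hr)
  set d : ℕ → ℝ := fun n => dist (c n) z
  have hd_pos (n : ℕ) : 0 < d n := dist_pos.2 (hcz n)
  have hd_anti : Antitone d := antitone_nat_of_succ_le fun n => by linarith [hc n, hd_pos n]
  have hd_lt {m n : ℕ} (h : m < n) : d n < d m / 4 := (hd_anti h).trans_lt (hc m)
  have hd_le (n : ℕ) : d n ≤ r * 4⁻¹ ^ n := by
    induction n with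
    | zero => simp only [pow_zero, mul_one]; linarith [hc0]
    | succ n ih => rw [pow_succ, ← mul_assoc]; linarith [hc n]
  have hd_lim : Tendsto (fun n => 2 * d n) atTop (𝓝 0) := by
    refine squeeze_zero (g := fun n => 2 * r * 4⁻¹ ^ n) (fun n => by linarith [hd_pos n])
      (fun n => by linarith [hd_le n]) ?_
    simpa using (tendsto_pow_atTop_nhds_zero_of_lt_one (by norm_num)
      (by norm_num : (4 : ℝ)⁻¹ < 1)).const_mul (2 * r)
  have hball (n : ℕ) : ball (c n) (d n / 4) ⊆ closedBall z (2 * d n) := fun x hx =>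
    mem_closedBall.2 (by linarith [mem_ball.1 hx, dist_triangle x (c n) z, hd_pos n])
  refine ⟨c, fun n => d n / 4, fun n => by linarith [hd_pos n], fun n => (hball n).trans ?_,
    fun n hn => ?_, (pairwise_disjoint_on _).2 fun m n hmn => ball_disjoint_ball ?_,
    ((tendsto_closedBall_smallSets z).comp hd_lim).smallSets_mono (.of_forall hball)⟩
  · exact closedBall_subset_ball (by linarith [hd_anti (Nat.zero_le n)])
  · rw [mem_ball, dist_comm] at hn
    linarith [hd_pos n]
  · linarith [dist_triangle (c m) (c n) z, hd_lt hmn, hd_pos n, dist_comm (c n) z]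

end Metric

lemma countable_Iio_of_lt_aleph_one_ord {α : Ordinal} (hα : α < (Cardinal.aleph 1).ord) :
    (Iio α).Countable := by
  rw [← Cardinal.le_aleph0_iff_set_countable, Cardinal.mk_Iio_ordinal, Cardinal.lift_le_aleph0,
    ← Cardinal.lt_aleph_one_iff]
  exact Cardinal.lt_ord.1 hα

theorem stmt11_general {P : Type*} [MetricSpace P]
    (hperf : derivedSet (Set.univ : Set P) = Set.univ)
    (α : Ordinal) (hα : α < (Cardinal.aleph 1).ord) (z : P) (r : ℝ) (hr : 0 < r) :
    ∃ K : Set P, IsCompact K ∧ K.Countable ∧ K ⊆ Metric.ball z r ∧ cbDeriv K α = {z} := by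
  induction α using WellFoundedLT.induction generalizing z r with
  | _ α ih =>
  rcases eq_or_ne α 0 with rfl | hα0
  · exact ⟨{z}, isCompact_singleton, countable_singleton z,
      singleton_subset_iff.2 (mem_ball_self hr), cbDeriv_zero _⟩
  have : Countable (Iio α) := (countable_Iio_of_lt_aleph_one_ord hα).to_subtype
  have : Nonempty (Iio α) := ⟨⟨0, pos_iff_ne_zero.2 hα0⟩⟩
  obtain ⟨β, hβ⟩ := exists_seq_tendsto (atTop : Filter (Iio α))
  have hz : (𝓝[≠] z).NeBot := by
    simpa [mem_derivedSet, AccPt] using (by rw [hperf]; exact mem_univ z : z ∈ derivedSet univ)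
  obtain ⟨c, ρ, hρ, hball, hzball, hdisj, hlim⟩ := exists_pairwise_disjoint_balls_tendsto hz hr
  choose K hKc hKcount hKball hKcb using
    fun n => ih (β n) (β n).2 ((β n).2.trans hα) (c n) (ρ n) (hρ n)
  refine ⟨insert z (⋃ n, K n),
    isCompact_insert_iUnion hKc (hlim.smallSets_mono (.of_forall hKball)),
    (countable_iUnion hKcount).insert z,
    insert_subset (mem_ball_self hr) (iUnion_subset fun n => (hKball n).trans (hball n)),
    cbDeriv_insert_iUnion_eq_singleton (fun _ => isOpen_ball) hdisj hzball hlim hKc hKball hKcb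
      (fun n => (β n).2) fun γ hγ => (tendsto_atTop.1 hβ ⟨γ, hγ⟩).frequently⟩

theorem stmt11 {P : Type*} [MetricSpace P] [CompleteSpace P] [Nonempty P]
    (hperf : derivedSet (Set.univ : Set P) = Set.univ)
    (α : Ordinal) (hα : α < (Cardinal.aleph 1).ord) (z : P) (r : ℝ) (hr : 0 < r) :
    ∃ K : Set P, IsCompact K ∧ K.Countable ∧ K ⊆ Metric.ball z r ∧ cbDeriv K α = {z} :=
  stmt11_general hperf α hα z r hr
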